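/- Let B be a finite left skew brace with Frat(B) = 0. Then Fit(B) is the product (equivalently, the sum) of all the abelian minimal ideals of B. -/

import Mathlib

universe u

/-- A left skew brace: a set with two group structures `(B,+)` and `(B,·)` sharing the
same identity element, satisfying `a·(b+c) = a·b - a + a·c`. -/
class SkewBrace (B : Type u) extends AddGroup B, Group B where
  zero_eq_one : (0 : B) = 1
  skew_distrib : ∀ a b c : B, a * (b + c) = a * b + (-a + a * c)

namespace SkewBrace

variable {B : Type u} [SkewBrace B]

/-- The star product `a ∗ b = -a + a·b - b`. -/
def sbStar (a b : B) : B := -a + a * b + -b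

/-- The additive commutator `[a,b]₊ = -a - b + a + b`. -/
def addCommutator (a b : B) : B := -a + -b + a + b

/-- The multiplicative commutator `[a,b]· = a⁻¹b⁻¹ab`. -/
def mulCommutator (a b : B) : B := a⁻¹ * b⁻¹ * a * b

/-- A subbrace: a subset that is a subgroup of both `(B,+)` and `(B,·)`. -/
structure IsSubbrace (S : Set B) : Prop where
  zero_mem : (0 : B) ∈ S
  add_mem : ∀ ⦃a b : B⦄, a ∈ S → b ∈ S → a + b ∈ S
  neg_mem : ∀ ⦃a : B⦄, a ∈ S → -a ∈ S
  mul_mem : ∀ ⦃a b : B⦄, a ∈ S → b ∈ S → a * b ∈ S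
  inv_mem : ∀ ⦃a : B⦄, a ∈ S → a⁻¹ ∈ S

/-- `J` is an ideal of the subbrace `S`: a subbrace of `S`, normal in `(S,+)` and
`(S,·)`, with `S ∗ J ⊆ J` and `J ∗ S ⊆ J`. -/
structure IsIdealIn (S J : Set B) : Prop where
  subset : J ⊆ S
  isSubbrace : IsSubbrace J
  add_conj_mem : ∀ ⦃b : B⦄, b ∈ S → ∀ ⦃a : B⦄, a ∈ J → b + a + -b ∈ J
  mul_conj_mem : ∀ ⦃b : B⦄, b ∈ S → ∀ ⦃a : B⦄, a ∈ J → b * a * b⁻¹ ∈ J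
  star_mem_left : ∀ ⦃b : B⦄, b ∈ S → ∀ ⦃a : B⦄, a ∈ J → sbStar b a ∈ J
  star_mem_right : ∀ ⦃a : B⦄, a ∈ J → ∀ ⦃b : B⦄, b ∈ S → sbStar a b ∈ J

/-- An ideal of the brace `B`. -/
def IsIdeal (J : Set B) : Prop := IsIdealIn (Set.univ : Set B) J

/-- A left ideal: a subbrace `L` with `B ∗ L ⊆ L`. -/
structure IsLeftIdeal (L : Set B) : Prop where
  isSubbrace : IsSubbrace L
  star_mem_left : ∀ (b : B), ∀ ⦃a : B⦄, a ∈ L → sbStar b a ∈ L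

/-- The ideal of `B` generated by a subset `E`. -/
def idealClosure (E : Set B) : Set B := ⋂₀ {I : Set B | IsIdeal I ∧ E ⊆ I}

/-- The subbrace of `B` generated by a subset `E`. -/
def subbraceClosure (E : Set B) : Set B := ⋂₀ {S : Set B | IsSubbrace S ∧ E ⊆ S}

/-- The set `X_{I,J} = [I,J]₊ ∪ [I,J]· ∪ {i·j - (i+j) : i ∈ I, j ∈ J}`. -/
def commSet (I J : Set B) : Set B :=
  (AddSubgroup.closure {x : B | ∃ i ∈ I, ∃ j ∈ J, x = addCommutator i j} : Set B) ∪
    (Subgroup.closure {x : B | ∃ i ∈ I, ∃ j ∈ J, x = mulCommutator i j} : Set B) ∪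
    {x : B | ∃ i ∈ I, ∃ j ∈ J, x = i * j + -(i + j)}

/-- The commutator ideal `[I,J]^B`: the ideal of `B` generated by `X_{I,J}`. -/
def commIdeal (I J : Set B) : Set B := idealClosure (commSet I J)

/-- The set `X ∗ Y = {x ∗ y : x ∈ X, y ∈ Y}`. -/
def starSet (X Y : Set B) : Set B := {z : B | ∃ x ∈ X, ∃ y ∈ Y, z = sbStar x y}

/-- The centre of the subbrace `S`. -/
def centreIn (S : Set B) : Set B :=
  {a ∈ S | ∀ b ∈ S, a + b = b + a ∧ a + b = a * b ∧ a + b = b * a}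

/-- The centre `ζ(B)` of the brace `B`. -/
def centre (B : Type u) [SkewBrace B] : Set B := centreIn (Set.univ : Set B)

/-- For ideals `J ≤ I` of the subbrace `S`: `I/J` is a central factor of `S`,
i.e. `I/J ≤ ζ(S/J)`. -/
def IsCentralFactorIn (S J I : Set B) : Prop :=
  ∀ ⦃a : B⦄, a ∈ I → ∀ ⦃b : B⦄, b ∈ S →
    -(a + b) + (b + a) ∈ J ∧ -(a + b) + a * b ∈ J ∧ -(a + b) + b * a ∈ J

/-- The subbrace `S` is centrally nilpotent of class at most `n`: there is a chain of
ideals `0 = I₀ ≤ I₁ ≤ … ≤ Iₙ = S` of `S` with `I_{k+1}/I_k ≤ ζ(S/I_k)`. -/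
def CentrallyNilpotentInOfClassLE (S : Set B) (n : ℕ) : Prop :=
  ∃ I : ℕ → Set B, I 0 = {0} ∧ I n = S ∧
    (∀ k ≤ n, IsIdealIn S (I k)) ∧
    (∀ k < n, I k ⊆ I (k + 1)) ∧
    (∀ k < n, IsCentralFactorIn S (I k) (I (k + 1)))

/-- The subbrace `S` is centrally nilpotent. -/
def CentrallyNilpotentIn (S : Set B) : Prop := ∃ n : ℕ, CentrallyNilpotentInOfClassLE S n

/-- The brace `B` is centrally nilpotent. -/
def CentrallyNilpotent (B : Type u) [SkewBrace B] : Prop :=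
  CentrallyNilpotentIn (Set.univ : Set B)

/-- The brace `B` is locally centrally-nilpotent: every finitely generated subbrace is
centrally nilpotent. -/
def LocallyCentrallyNilpotent (B : Type u) [SkewBrace B] : Prop :=
  ∀ E : Finset B, CentrallyNilpotentIn (subbraceClosure (E : Set B))

/-- The (finite) upper central series of `B`: `ζ₀(B) = 0` and
`ζ_{n+1}(B)/ζ_n(B) = ζ(B/ζ_n(B))`. -/
def zetaNat (B : Type u) [SkewBrace B] : ℕ → Set B
  | 0 => {0}
  | n + 1 =>
    {a : B | ∀ b : B, -(a + b) + (b + a) ∈ zetaNat B n ∧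
      -(a + b) + a * b ∈ zetaNat B n ∧ -(a + b) + b * a ∈ zetaNat B n}

/-- The transfinite upper central series of `B`. -/
noncomputable def zetaOrd (B : Type u) [SkewBrace B] (o : Ordinal.{u}) : Set B :=
  Ordinal.limitRecOn o ({0} : Set B)
    (fun _ Z =>
      {a : B | ∀ b : B, -(a + b) + (b + a) ∈ Z ∧ -(a + b) + a * b ∈ Z ∧ -(a + b) + b * a ∈ Z})
    (fun o _ ih => ⋃ (β : {β : Ordinal.{u} // β < o}), ih β.1 β.2)

/-- The brace `B` is hypercentral: the upper central series reaches `B`. -/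
def Hypercentral (B : Type u) [SkewBrace B] : Prop :=
  ∃ o : Ordinal.{u}, zetaOrd B o = Set.univ

/-- The largest ideal of `B` contained in `C`. -/
def idealCore (C : Set B) : Set B := ⋃₀ {I : Set B | IsIdeal I ∧ I ⊆ C}

/-- The lower `B`-central series of an ideal `I`:
`lowerCentralB I n = Γ_{n+1}(I)^B`, so `Γ₁(I)^B = I` and `Γ_{n+1}(I)^B = [Γ_n(I)^B, I]^B`. -/
def lowerCentralB (I : Set B) : ℕ → Set B
  | 0 => I
  | n + 1 => commIdeal (lowerCentralB I n) I

/-- `I` is a `B`-centrally nilpotent ideal. -/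
def BCentrallyNilpotent (I : Set B) : Prop := ∃ n : ℕ, lowerCentralB I n = {0}

/-- The derived series of an ideal with respect to `B`. -/
def derivedB (I : Set B) : ℕ → Set B
  | 0 => I
  | n + 1 => commIdeal (derivedB I n) (derivedB I n)

/-- The preimages in `B` of the derived series of `I/F` with respect to `B/F`. -/
def derivedModB (F I : Set B) : ℕ → Set B
  | 0 => I
  | n + 1 => idealClosure (commSet (derivedModB F I n) (derivedModB F I n) ∪ F)

/-- The Fitting ideal of `B`: the ideal generated by all `B`-centrally nilpotent ideals. -/
def FitIdeal (B : Type u) [SkewBrace B] : Set B :=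
  idealClosure (⋃₀ {I : Set B | IsIdeal I ∧ BCentrallyNilpotent I})

/-- The centraliser of an ideal `I`: the largest ideal `C` with `[C,I]^B = 0`. -/
def idealCentraliser (I : Set B) : Set B :=
  ⋃₀ {C : Set B | IsIdeal C ∧ commIdeal C I ⊆ {0}}

/-- The centraliser of a chief factor `Itop/Ibot`: the largest ideal `C` of `B` with
`[C, Itop]^B ≤ Ibot`. -/
def factorCentraliser (Itop Ibot : Set B) : Set B :=
  ⋃₀ {C : Set B | IsIdeal C ∧ commIdeal C Itop ⊆ Ibot}

/-- A maximal left ideal of `B`. -/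
def IsMaximalLeftIdeal (L : Set B) : Prop :=
  IsLeftIdeal L ∧ L ≠ Set.univ ∧
    ∀ L' : Set B, IsLeftIdeal L' → L ⊆ L' → L' = L ∨ L' = Set.univ

/-- The Frattini ideal of `B`. -/
def FratIdeal (B : Type u) [SkewBrace B] : Set B :=
  (⋂₀ {L : Set B | IsMaximalLeftIdeal L}) ∩ FitIdeal B

/-- The additive torsion set `T₊(B)`. -/
def addTorsion (B : Type u) [SkewBrace B] : Set B := {a : B | ∃ n : ℕ, 0 < n ∧ n • a = 0}

/-- The multiplicative torsion set `T·(B)`. -/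
def mulTorsion (B : Type u) [SkewBrace B] : Set B := {a : B | ∃ n : ℕ, 0 < n ∧ a ^ n = 1}

/-- The order of an element of a brace: the cardinality of the subbrace it generates
(`0` if infinite). -/
noncomputable def elemOrder (a : B) : ℕ := Nat.card ↥(subbraceClosure ({a} : Set B))

/-- `a` is a `π`-element: it is periodic and its order is a `π`-number. -/
def IsPiElement (π : Set ℕ) (a : B) : Prop :=
  0 < elemOrder a ∧ ∀ p : ℕ, p.Prime → p ∣ elemOrder a → p ∈ π

/-- The order of the coset `a + J` in the quotient brace modulo the ideal `J`:
the number of cosets of `J` in the subbrace generated by `a` together with `J`. -/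
noncomputable def elemOrderMod (J : Set B) (a : B) : ℕ :=
  Nat.card ↥((fun x : B => {y : B | -x + y ∈ J}) '' subbraceClosure ({a} ∪ J))

/-- The coset of `a` modulo the ideal `J` is a `π`-element of the quotient brace. -/
def IsPiElementMod (π : Set ℕ) (J : Set B) (a : B) : Prop :=
  0 < elemOrderMod J a ∧ ∀ p : ℕ, p.Prime → p ∣ elemOrderMod J a → p ∈ π

/-- A subideal: a finite chain `S = C₀ ⊴ C₁ ⊴ … ⊴ Cₙ = B`. -/
def IsSubideal (S : Set B) : Prop :=
  ∃ (n : ℕ) (C : ℕ → Set B), C 0 = S ∧ C n = Set.univ ∧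
    (∀ k ≤ n, IsSubbrace (C k)) ∧ ∀ k < n, IsIdealIn (C (k + 1)) (C k)

/-- An ascendant subbrace: an ordinal-indexed ascending chain from `S` to `B`. -/
def IsAscendant (S : Set B) : Prop :=
  ∃ (l : Ordinal.{u}) (C : Ordinal.{u} → Set B), C 0 = S ∧ C l = Set.univ ∧
    (∀ α ≤ l, IsSubbrace (C α)) ∧
    (∀ α < l, IsIdealIn (C (α + 1)) (C α)) ∧
    ∀ μ ≤ l, Order.IsSuccLimit μ → C μ = ⋃ β < μ, C β

/-- A serial subbrace: there is a complete chain of subbraces containing `S` and `B`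
in which each member is an ideal of its immediate successor. -/
def IsSerial (S : Set B) : Prop :=
  ∃ 𝒞 : Set (Set B), S ∈ 𝒞 ∧ Set.univ ∈ 𝒞 ∧
    (∀ D ∈ 𝒞, IsSubbrace D) ∧
    (∀ D ∈ 𝒞, ∀ E ∈ 𝒞, D ⊆ E ∨ E ⊆ D) ∧
    (∀ 𝒟 ⊆ 𝒞, 𝒟.Nonempty → ⋃₀ 𝒟 ∈ 𝒞 ∧ ⋂₀ 𝒟 ∈ 𝒞) ∧
    ∀ D ∈ 𝒞, ∀ E ∈ 𝒞, D ⊂ E → (∀ F ∈ 𝒞, ¬(D ⊂ F ∧ F ⊂ E)) → IsIdealIn E D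

/-- `S` is a maximal `p`-subgroup of `(B,+)`. -/
def IsMaxAddPSubgroup (p : ℕ) (S : AddSubgroup B) : Prop :=
  (∀ a ∈ S, ∃ k : ℕ, p ^ k • a = 0) ∧
    ∀ T : AddSubgroup B, (∀ a ∈ T, ∃ k : ℕ, p ^ k • a = 0) → S ≤ T → T = S

/-- `S` is a maximal `p`-subgroup of `(B,·)`. -/
def IsMaxMulPSubgroup (p : ℕ) (S : Subgroup B) : Prop :=
  (∀ a ∈ S, ∃ k : ℕ, a ^ p ^ k = 1) ∧
    ∀ T : Subgroup B, (∀ a ∈ T, ∃ k : ℕ, a ^ p ^ k = 1) → S ≤ T → T = S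

/-- Formal 2-polynomials of a brace: terms in two variables built from `+`, `-`, `·`,
inverse and the constant `0`. -/
inductive Poly2 : Type
  | X : Poly2
  | Y : Poly2
  | zero : Poly2
  | add : Poly2 → Poly2 → Poly2
  | neg : Poly2 → Poly2
  | mul : Poly2 → Poly2 → Poly2
  | inv : Poly2 → Poly2

/-- Evaluation of a formal 2-polynomial in a brace. -/
def Poly2.eval : Poly2 → B → B → B
  | .X, a, _ => a
  | .Y, _, b => b
  | .zero, _, _ => 0
  | .add p q, a, b => p.eval a b + q.eval a b
  | .neg p, a, b => -(p.eval a b)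
  | .mul p q, a, b => p.eval a b * q.eval a b
  | .inv p, a, b => (p.eval a b)⁻¹

/-- A 2-polynomial is absorbing if it vanishes whenever one variable is `0`. -/
def Poly2.Absorbing (p : Poly2) (B : Type u) [SkewBrace B] : Prop :=
  (∀ x : B, p.eval x (0 : B) = 0) ∧ ∀ y : B, p.eval (0 : B) y = 0

/-!
Let `I` be a `B`-centrally nilpotent ideal and `L` a maximal left ideal with `[I,I]^B ⊄ L`. If a
term `G` of the lower `B`-central series of `I` is not in `L`, then `B = G + L`; if moreover
`[G,I]^B ⊆ L`, conjugation by `G` moves elements of `L ∩ I` only by elements of `[G,I]^B`, so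
`L ∩ I` is an ideal, `I = G + (L ∩ I)` and `[I,I]^B ⊆ [G,I]^B + (L ∩ I) ⊆ L`, a contradiction.
So no term of the series lies in `L`, which is absurd since the series reaches `0`. Hence
`[I,I]^B` lies in every maximal left ideal and in `Fit(B)`, that is in `Frat(B) = 0`: the ideals
generating `Fit(B)` are exactly the abelian ones. Conversely an abelian ideal `I ≠ 0` contains a
minimal ideal `A`, which lies in `Fit(B)` and so is missed by some maximal left ideal `L`; the
same argument with `G = I` shows that `L ∩ I` is an ideal, and `I = A + (L ∩ I)` lies in the
abelian socle by induction on `I`.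
-/

section

open scoped Pointwise

theorem mul_zero_eq (a : B) : a * 0 = a := by rw [zero_eq_one, mul_one]

theorem zero_mul_eq (a : B) : 0 * a = a := by rw [zero_eq_one, one_mul]

theorem inv_zero_eq : (0 : B)⁻¹ = 0 := by rw [zero_eq_one, inv_one]

theorem mul_neg_eq (a b : B) : a * -b = a + (-(a * b) + a) := by
  have h := skew_distrib a b (-b)
  rw [add_neg_cancel, mul_zero_eq] at h
  have h' : -(a * b) + a = -a + a * -b := by rw [neg_add_eq_iff_eq_add]; exact h
  rw [h', add_neg_cancel_left]

theorem star_add (a b c : B) : sbStar a (b + c) = sbStar a b + b + sbStar a c + -b := by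
  simp [sbStar, skew_distrib, neg_add_rev, add_assoc]

theorem star_mul (a b c : B) :
    sbStar (a * b) c = sbStar a (sbStar b c) + sbStar b c + sbStar a c := by
  simp [sbStar, skew_distrib, mul_neg_eq, neg_add_rev, add_assoc, mul_assoc]

theorem mul_add_neg_add_eq (a b : B) : a * b + -(a + b) = a + sbStar a b + -a := by
  simp [sbStar, neg_add_rev, add_assoc]

theorem addCommutator_add_left (a b c : B) :
    addCommutator (a + b) c = (-b + addCommutator a c + b) + addCommutator b c := by
  simp [addCommutator, neg_add_rev, add_assoc]

theorem mulCommutator_mul_left (a b c : B) :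
    mulCommutator (a * b) c = (b⁻¹ * mulCommutator a c * b) * mulCommutator b c := by
  simp [mulCommutator, mul_inv_rev, mul_assoc]

theorem mulCommutator_swap (a b : B) : mulCommutator b a = (mulCommutator a b)⁻¹ := by
  simp [mulCommutator, mul_inv_rev, mul_assoc]

namespace IsSubbrace

variable {S T : Set B}

theorem inter (hS : IsSubbrace S) (hT : IsSubbrace T) : IsSubbrace (S ∩ T) :=
  ⟨⟨hS.zero_mem, hT.zero_mem⟩, fun _ _ ha hb => ⟨hS.add_mem ha.1 hb.1, hT.add_mem ha.2 hb.2⟩,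
    fun _ ha => ⟨hS.neg_mem ha.1, hT.neg_mem ha.2⟩,
    fun _ _ ha hb => ⟨hS.mul_mem ha.1 hb.1, hT.mul_mem ha.2 hb.2⟩,
    fun _ ha => ⟨hS.inv_mem ha.1, hT.inv_mem ha.2⟩⟩

def toAddSubgroup (hS : IsSubbrace S) : AddSubgroup B where
  carrier := S
  add_mem' := fun ha hb => hS.add_mem ha hb
  zero_mem' := hS.zero_mem
  neg_mem' := fun ha => hS.neg_mem ha

def toSubgroup (hS : IsSubbrace S) : Subgroup B where
  carrier := S
  mul_mem' := fun ha hb => hS.mul_mem ha hb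
  one_mem' := zero_eq_one (B := B) ▸ hS.zero_mem
  inv_mem' := fun ha => hS.inv_mem ha

end IsSubbrace

namespace IsIdeal

variable {J : Set B}

theorem zero_mem (hJ : IsIdeal J) : (0 : B) ∈ J := hJ.isSubbrace.zero_mem

theorem add_mem (hJ : IsIdeal J) {a b : B} (ha : a ∈ J) (hb : b ∈ J) : a + b ∈ J :=
  hJ.isSubbrace.add_mem ha hb

theorem neg_mem (hJ : IsIdeal J) {a : B} (ha : a ∈ J) : -a ∈ J := hJ.isSubbrace.neg_mem ha

theorem mul_mem (hJ : IsIdeal J) {a b : B} (ha : a ∈ J) (hb : b ∈ J) : a * b ∈ J :=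
  hJ.isSubbrace.mul_mem ha hb

theorem inv_mem (hJ : IsIdeal J) {a : B} (ha : a ∈ J) : a⁻¹ ∈ J := hJ.isSubbrace.inv_mem ha

theorem add_conj_mem (hJ : IsIdeal J) (b : B) {a : B} (ha : a ∈ J) : b + a + -b ∈ J :=
  IsIdealIn.add_conj_mem hJ (Set.mem_univ b) ha

theorem neg_add_conj_mem (hJ : IsIdeal J) (b : B) {a : B} (ha : a ∈ J) : -b + a + b ∈ J := by
  simpa using hJ.add_conj_mem (-b) ha

theorem mul_conj_mem (hJ : IsIdeal J) (b : B) {a : B} (ha : a ∈ J) : b * a * b⁻¹ ∈ J :=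
  IsIdealIn.mul_conj_mem hJ (Set.mem_univ b) ha

theorem inv_mul_conj_mem (hJ : IsIdeal J) (b : B) {a : B} (ha : a ∈ J) : b⁻¹ * a * b ∈ J := by
  simpa using hJ.mul_conj_mem b⁻¹ ha

theorem star_mem_left (hJ : IsIdeal J) (b : B) {a : B} (ha : a ∈ J) : sbStar b a ∈ J :=
  IsIdealIn.star_mem_left hJ (Set.mem_univ b) ha

theorem star_mem_right (hJ : IsIdeal J) {a : B} (ha : a ∈ J) (b : B) : sbStar a b ∈ J :=
  IsIdealIn.star_mem_right hJ ha (Set.mem_univ b)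

end IsIdeal

theorem isIdeal_zero : IsIdeal ({0} : Set B) := by
  refine ⟨Set.subset_univ _, ⟨rfl, ?_, ?_, ?_, ?_⟩, ?_, ?_, ?_, ?_⟩ <;>
    simp +contextual [sbStar, mul_zero_eq, zero_mul_eq, inv_zero_eq, ← zero_eq_one]

theorem isIdeal_sInter {𝒮 : Set (Set B)} (h : ∀ I ∈ 𝒮, IsIdeal I) : IsIdeal (⋂₀ 𝒮) :=
  ⟨Set.subset_univ _,
    ⟨fun I hI => (h I hI).zero_mem, fun _ _ ha hb I hI => (h I hI).add_mem (ha I hI) (hb I hI),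
      fun _ ha I hI => (h I hI).neg_mem (ha I hI),
      fun _ _ ha hb I hI => (h I hI).mul_mem (ha I hI) (hb I hI),
      fun _ ha I hI => (h I hI).inv_mem (ha I hI)⟩,
    fun b _ _ ha I hI => (h I hI).add_conj_mem b (ha I hI),
    fun b _ _ ha I hI => (h I hI).mul_conj_mem b (ha I hI),
    fun b _ _ ha I hI => (h I hI).star_mem_left b (ha I hI),
    fun _ ha b _ I hI => (h I hI).star_mem_right (ha I hI) b⟩

theorem isIdeal_idealClosure (E : Set B) : IsIdeal (idealClosure E) :=
  isIdeal_sInter fun _ hI => hI.1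

theorem subset_idealClosure (E : Set B) : E ⊆ idealClosure E :=
  fun _ hx => Set.mem_sInter.2 fun _ hI => hI.2 hx

theorem idealClosure_subset {E I : Set B} (hI : IsIdeal I) (h : E ⊆ I) : idealClosure E ⊆ I :=
  fun _ hx => Set.mem_sInter.1 hx I ⟨hI, h⟩

theorem IsIdeal.neg_add_mem_iff {J : Set B} (hJ : IsIdeal J) (a b : B) :
    -a + b ∈ J ↔ a⁻¹ * b ∈ J := by
  have e₁ : a⁻¹ * b = sbStar a⁻¹ (-a + b) + (-a + b) := by
    conv_lhs => rw [← add_neg_cancel_left a b, skew_distrib, inv_mul_cancel, ← zero_eq_one]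
    simp [sbStar, add_assoc]
  have e₂ : -a + b = sbStar a (a⁻¹ * b) + a⁻¹ * b := by simp [sbStar, add_assoc]
  exact ⟨fun h => e₁ ▸ hJ.add_mem (hJ.star_mem_left _ h) h,
    fun h => e₂ ▸ hJ.add_mem (hJ.star_mem_left _ h) h⟩

theorem IsIdeal.addCommutator_mem_left {D : Set B} (hD : IsIdeal D) {a : B} (ha : a ∈ D)
    (b : B) : addCommutator a b ∈ D := by
  simpa [addCommutator, add_assoc] using hD.add_mem (hD.neg_mem ha) (hD.neg_add_conj_mem b ha)

theorem IsIdeal.mulCommutator_mem_left {D : Set B} (hD : IsIdeal D) {a : B} (ha : a ∈ D)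
    (b : B) : mulCommutator a b ∈ D := by
  simpa [mulCommutator, mul_assoc] using hD.mul_mem (hD.inv_mem ha) (hD.inv_mul_conj_mem b ha)

theorem IsIdeal.mul_add_neg_add_mem_left {D : Set B} (hD : IsIdeal D) {a : B} (ha : a ∈ D)
    (b : B) : a * b + -(a + b) ∈ D := by
  rw [mul_add_neg_add_eq]
  exact hD.add_conj_mem a (hD.star_mem_right ha b)

section CommIdeal

variable {X Y : Set B} {x y : B}

theorem isIdeal_commIdeal (X Y : Set B) : IsIdeal (commIdeal X Y) := isIdeal_idealClosure _

theorem addCommutator_mem_commIdeal (hx : x ∈ X) (hy : y ∈ Y) :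
    addCommutator x y ∈ commIdeal X Y :=
  subset_idealClosure _ (Or.inl (Or.inl (AddSubgroup.subset_closure ⟨x, hx, y, hy, rfl⟩)))

theorem mulCommutator_mem_commIdeal (hx : x ∈ X) (hy : y ∈ Y) :
    mulCommutator x y ∈ commIdeal X Y :=
  subset_idealClosure _ (Or.inl (Or.inr (Subgroup.subset_closure ⟨x, hx, y, hy, rfl⟩)))

theorem mul_add_neg_add_mem_commIdeal (hx : x ∈ X) (hy : y ∈ Y) :
    x * y + -(x + y) ∈ commIdeal X Y :=
  subset_idealClosure _ (Or.inr ⟨x, hx, y, hy, rfl⟩)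

theorem star_mem_commIdeal (hx : x ∈ X) (hy : y ∈ Y) : sbStar x y ∈ commIdeal X Y := by
  simpa [sbStar, add_assoc] using
    (isIdeal_commIdeal X Y).neg_add_conj_mem x (mul_add_neg_add_mem_commIdeal hx hy)

/-- Modulo `[X,Y]^B` we have `y·x ≡ x·y ≡ x + y ≡ y + x`, whence `y ∗ x ≡ 0`. -/
theorem star_mem_commIdeal_swap (hx : x ∈ X) (hy : y ∈ Y) : sbStar y x ∈ commIdeal X Y := by
  have hJ := isIdeal_commIdeal X Y
  have h₁ : -(y + x) + (x + y) ∈ commIdeal X Y := by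
    simpa [addCommutator, add_assoc] using addCommutator_mem_commIdeal hx hy
  have h₂ : -(x + y) + x * y ∈ commIdeal X Y := by
    simpa [add_assoc] using hJ.neg_add_conj_mem (x + y) (mul_add_neg_add_mem_commIdeal hx hy)
  have h₃ : -(x * y) + y * x ∈ commIdeal X Y := by
    rw [hJ.neg_add_mem_iff, show (x * y)⁻¹ * (y * x) = mulCommutator y x by
      simp [mulCommutator, mul_assoc], mulCommutator_swap]
    exact hJ.inv_mem (mulCommutator_mem_commIdeal hx hy)
  have h : -(y + x) + y * x ∈ commIdeal X Y := by
    simpa [add_assoc] using hJ.add_mem h₁ (hJ.add_mem h₂ h₃)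
  simpa [sbStar, add_assoc] using hJ.add_conj_mem x h

theorem commIdeal_subset_of_forall {D : Set B} (hD : IsIdeal D)
    (hadd : ∀ x ∈ X, ∀ y ∈ Y, addCommutator x y ∈ D)
    (hmul : ∀ x ∈ X, ∀ y ∈ Y, mulCommutator x y ∈ D)
    (hmix : ∀ x ∈ X, ∀ y ∈ Y, x * y + -(x + y) ∈ D) : commIdeal X Y ⊆ D := by
  refine idealClosure_subset hD ?_
  rintro z ((hz | hz) | ⟨x, hx, y, hy, rfl⟩)
  · refine (AddSubgroup.closure_le hD.isSubbrace.toAddSubgroup).2 ?_ hz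
    rintro _ ⟨x, hx, y, hy, rfl⟩
    exact hadd x hx y hy
  · refine (Subgroup.closure_le hD.isSubbrace.toSubgroup).2 ?_ hz
    rintro _ ⟨x, hx, y, hy, rfl⟩
    exact hmul x hx y hy
  · exact hmix x hx y hy

theorem commIdeal_subset_left (hX : IsIdeal X) (Y : Set B) : commIdeal X Y ⊆ X :=
  commIdeal_subset_of_forall hX (fun _ hx y _ => hX.addCommutator_mem_left hx y)
    (fun _ hx y _ => hX.mulCommutator_mem_left hx y)
    (fun _ hx y _ => hX.mul_add_neg_add_mem_left hx y)

end CommIdeal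

theorem IsIdeal.add_eq_mul {A : Set B} (hA : IsIdeal A) (S : Set B) : A + S = A * S := by
  ext x
  rw [Set.mem_add, Set.mem_mul]
  constructor
  · rintro ⟨a, ha, s, hs, rfl⟩
    have h : s⁻¹ * (a + s) ∈ A :=
      (hA.neg_add_mem_iff _ _).1 (by simpa [add_assoc] using hA.neg_add_conj_mem s ha)
    exact ⟨_, hA.mul_conj_mem s h, s, hs, by simp [mul_assoc]⟩
  · rintro ⟨a, ha, s, hs, rfl⟩
    have h : -s + a * s ∈ A :=
      (hA.neg_add_mem_iff _ _).2 (by simpa [mul_assoc] using hA.inv_mul_conj_mem s ha)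
    exact ⟨_, hA.add_conj_mem s h, s, hs, by simp [add_assoc]⟩

theorem IsSubbrace.ideal_add {A S : Set B} (hA : IsIdeal A) (hS : IsSubbrace S) :
    IsSubbrace (A + S) := by
  have : hA.isSubbrace.toAddSubgroup.Normal := ⟨fun _ ha b => hA.add_conj_mem b ha⟩
  have : hA.isSubbrace.toSubgroup.Normal := ⟨fun _ ha b => hA.mul_conj_mem b ha⟩
  have hadd : A + S = ↑(hA.isSubbrace.toAddSubgroup ⊔ hS.toAddSubgroup) :=
    (AddSubgroup.normal_add hA.isSubbrace.toAddSubgroup hS.toAddSubgroup).symm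
  have hmul : A + S = ↑(hA.isSubbrace.toSubgroup ⊔ hS.toSubgroup) :=
    (hA.add_eq_mul S).trans (Subgroup.normal_mul hA.isSubbrace.toSubgroup hS.toSubgroup).symm
  refine ⟨?_, fun a b => ?_, fun a => ?_, fun a b => ?_, fun a => ?_⟩
  · rw [hadd]; exact AddSubgroup.zero_mem _
  · rw [hadd]; exact AddSubgroup.add_mem _
  · rw [hadd]; exact AddSubgroup.neg_mem _
  · rw [hmul]; exact Subgroup.mul_mem _
  · rw [hmul]; exact Subgroup.inv_mem _

theorem IsLeftIdeal.ideal_add {A L : Set B} (hA : IsIdeal A) (hL : IsLeftIdeal L) :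
    IsLeftIdeal (A + L) := by
  refine ⟨hL.isSubbrace.ideal_add hA, ?_⟩
  rintro b _ ⟨a, ha, l, hl, rfl⟩
  refine ⟨sbStar b a + (a + (sbStar b l + -a + -sbStar b l)),
    hA.add_mem (hA.star_mem_left b ha) (hA.add_mem ha (hA.add_conj_mem _ (hA.neg_mem ha))),
    sbStar b l, hL.star_mem_left b hl, ?_⟩
  simp [star_add, add_assoc]

theorem IsMaximalLeftIdeal.ideal_add_eq_univ {A L : Set B} (hL : IsMaximalLeftIdeal L)
    (hA : IsIdeal A) (hAL : ¬ A ⊆ L) : A + L = Set.univ := by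
  obtain ⟨a, ha, haL⟩ := Set.not_subset.1 hAL
  refine (hL.2.2 _ (hL.1.ideal_add hA) fun l hl => ⟨0, hA.zero_mem, l, hl, zero_add l⟩).resolve_left
    fun h => haL ?_
  exact h ▸ ⟨a, ha, 0, hL.1.isSubbrace.zero_mem, add_zero a⟩

theorem subset_add_inter {A L X : Set B} (hX : IsSubbrace X) (hAX : A ⊆ X)
    (hAL : A + L = Set.univ) : X ⊆ A + (L ∩ X) := by
  intro x hx
  obtain ⟨a, ha, l, hl, rfl⟩ : x ∈ A + L := hAL ▸ Set.mem_univ x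
  exact ⟨a, ha, l, ⟨hl, by simpa using hX.add_mem (hX.neg_mem (hAX ha)) hx⟩, rfl⟩

theorem commIdeal_subset_of_subset_add {G C X Y D : Set B} (hG : IsIdeal G) (hY : IsIdeal Y)
    (hD : IsIdeal D) (hX : X ⊆ G + C) (hGY : commIdeal G Y ⊆ D) (hCD : C ⊆ D) :
    commIdeal X Y ⊆ D := by
  have hX' : X ⊆ G * C := hG.add_eq_mul C ▸ hX
  refine commIdeal_subset_of_forall hD (fun x hx y hy => ?_) (fun x hx y hy => ?_)
    (fun x hx y hy => ?_)
  · obtain ⟨g, hg, c, hc, rfl⟩ := hX hx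
    rw [addCommutator_add_left]
    exact hD.add_mem (hD.neg_add_conj_mem c (hGY (addCommutator_mem_commIdeal hg hy)))
      (hD.addCommutator_mem_left (hCD hc) y)
  · obtain ⟨g, hg, c, hc, rfl⟩ := hX' hx
    rw [mulCommutator_mul_left]
    exact hD.mul_mem (hD.inv_mul_conj_mem c (hGY (mulCommutator_mem_commIdeal hg hy)))
      (hD.mulCommutator_mem_left (hCD hc) y)
  · obtain ⟨g, hg, c, hc, rfl⟩ := hX' hx
    rw [mul_add_neg_add_eq, star_mul]
    refine hD.add_conj_mem _ (hD.add_mem (hD.add_mem ?_ (hD.star_mem_right (hCD hc) y))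
      (hGY (star_mem_commIdeal hg hy)))
    exact hGY (star_mem_commIdeal hg (hY.star_mem_left c hy))

theorem isIdeal_inter_of_commIdeal_subset {G I L : Set B} (hI : IsIdeal I) (hG : IsIdeal G)
    (hGI : G ⊆ I) (hL : IsLeftIdeal L) (hGL : G + L = Set.univ) (hGIL : commIdeal G I ⊆ L) :
    IsIdeal (L ∩ I) := by
  have hC : IsSubbrace (L ∩ I) := hL.isSubbrace.inter hI.isSubbrace
  have hK : commIdeal G I ⊆ L ∩ I := fun _ hx => ⟨hGIL hx, hGI (commIdeal_subset_left hG I hx)⟩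
  have conj_by_G : ∀ g ∈ G, ∀ c ∈ L ∩ I, g + c + -g ∈ L ∩ I := fun g hg c hc => by
    simpa [addCommutator, add_assoc] using
      hC.add_mem (hK (addCommutator_mem_commIdeal (hG.neg_mem hg) (hI.neg_mem hc.2))) hc
  have mem_add (b : B) : b ∈ G + L := hGL ▸ Set.mem_univ b
  have mem_mul (b : B) : b ∈ G * L := hG.add_eq_mul L ▸ mem_add b
  refine ⟨Set.subset_univ _, hC, fun b _ c hc => ?_, fun b _ c hc => ?_,
    fun b _ c hc => ⟨hL.star_mem_left b hc.1, hI.star_mem_left b hc.2⟩, fun c hc b _ => ?_⟩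
  · obtain ⟨g, hg, l, hl, rfl⟩ := mem_add b
    have hc' : l + c + -l ∈ L ∩ I := ⟨hL.isSubbrace.add_mem (hL.isSubbrace.add_mem hl hc.1)
      (hL.isSubbrace.neg_mem hl), hI.add_conj_mem l hc.2⟩
    simpa [add_assoc] using conj_by_G g hg _ hc'
  · obtain ⟨g, hg, l, hl, rfl⟩ := mem_mul b
    have hc' : l * c * l⁻¹ ∈ L ∩ I := ⟨hL.isSubbrace.mul_mem (hL.isSubbrace.mul_mem hl hc.1)
      (hL.isSubbrace.inv_mem hl), hI.mul_conj_mem l hc.2⟩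
    simpa [mulCommutator, mul_assoc] using
      hC.mul_mem (hK (mulCommutator_mem_commIdeal (hG.inv_mem hg) (hI.inv_mem hc'.2))) hc'
  · obtain ⟨g, hg, l, hl, rfl⟩ := mem_add b
    simpa [star_add, add_assoc] using hC.add_mem (hK (star_mem_commIdeal_swap hg hc.2))
      (conj_by_G g hg _ ⟨hL.star_mem_left c hl, hI.star_mem_right hc.2 l⟩)

theorem commIdeal_self_subset_of_commIdeal_subset {G I L : Set B} (hI : IsIdeal I)
    (hG : IsIdeal G) (hGI : G ⊆ I) (hL : IsLeftIdeal L) (hGL : G + L = Set.univ)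
    (hGIL : commIdeal G I ⊆ L) : commIdeal I I ⊆ L := by
  have hK : commIdeal G I ⊆ L ∩ I := fun _ hx => ⟨hGIL hx, hGI (commIdeal_subset_left hG I hx)⟩
  have hC := isIdeal_inter_of_commIdeal_subset hI hG hGI hL hGL hGIL
  exact (commIdeal_subset_of_subset_add hG hI hC (subset_add_inter hI.isSubbrace hGI hGL) hK
    subset_rfl).trans Set.inter_subset_left

theorem isIdeal_lowerCentralB {I : Set B} (hI : IsIdeal I) : ∀ k, IsIdeal (lowerCentralB I k)
  | 0 => hI
  | _ + 1 => isIdeal_commIdeal _ _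

theorem lowerCentralB_subset {I : Set B} (hI : IsIdeal I) : ∀ k, lowerCentralB I k ⊆ I
  | 0 => subset_rfl
  | k + 1 =>
    (commIdeal_subset_left (isIdeal_lowerCentralB hI k) I).trans (lowerCentralB_subset hI k)

theorem BCentrallyNilpotent.commIdeal_self_subset {I L : Set B} (hI : IsIdeal I)
    (hbcn : BCentrallyNilpotent I) (hL : IsMaximalLeftIdeal L) : commIdeal I I ⊆ L := by
  by_contra hII
  have not_subset : ∀ k, ¬ lowerCentralB I k ⊆ L := by
    intro k
    induction k with
    | zero => exact fun hIL => hII ((commIdeal_subset_left hI I).trans hIL)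
    | succ k ih =>
      have hG := isIdeal_lowerCentralB hI k
      exact fun hGIL => hII (commIdeal_self_subset_of_commIdeal_subset hI hG
        (lowerCentralB_subset hI k) hL.1 (hL.ideal_add_eq_univ hG ih) hGIL)
  obtain ⟨n, hn⟩ := hbcn
  exact not_subset n (hn ▸ Set.singleton_subset_iff.2 hL.1.isSubbrace.zero_mem)

theorem subset_fitIdeal {I : Set B} (hI : IsIdeal I) (hbcn : BCentrallyNilpotent I) :
    I ⊆ FitIdeal B :=
  fun _ hx => subset_idealClosure _ ⟨I, ⟨hI, hbcn⟩, hx⟩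

def IsAbelian (I : Set B) : Prop := ∀ a ∈ I, ∀ b ∈ I, a + b = b + a ∧ a * b = a + b

theorem isAbelian_iff_commIdeal_self_subset {I : Set B} : IsAbelian I ↔ commIdeal I I ⊆ {0} := by
  constructor
  · intro hab
    refine commIdeal_subset_of_forall isIdeal_zero (fun a ha b hb => ?_) (fun a ha b hb => ?_)
      (fun a ha b hb => ?_)
    · simp [addCommutator, add_assoc, (hab a ha b hb).1]
    · have hc : a * b = b * a := by rw [(hab a ha b hb).2, (hab b hb a ha).2, (hab a ha b hb).1]
      simp [mulCommutator, mul_assoc, hc, zero_eq_one]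
    · simp [(hab a ha b hb).2]
  · intro h a ha b hb
    have h₁ : addCommutator a b = 0 := h (addCommutator_mem_commIdeal ha hb)
    have h₂ : a * b + -(a + b) = 0 := h (mul_add_neg_add_mem_commIdeal ha hb)
    refine ⟨(eq_neg_add_iff_add_eq.1 (neg_add_eq_zero.1 ?_)).symm, add_neg_eq_zero.1 h₂⟩
    simpa [addCommutator, add_assoc] using h₁

theorem IsAbelian.bCentrallyNilpotent {I : Set B} (hab : IsAbelian I) : BCentrallyNilpotent I :=
  ⟨1, subset_antisymm (isAbelian_iff_commIdeal_self_subset.1 hab)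
    (Set.singleton_subset_iff.2 (isIdeal_commIdeal I I).zero_mem)⟩

theorem BCentrallyNilpotent.isAbelian (hFrat : FratIdeal B = {0}) {I : Set B} (hI : IsIdeal I)
    (hbcn : BCentrallyNilpotent I) : IsAbelian I :=
  isAbelian_iff_commIdeal_self_subset.2 <| hFrat ▸ fun _ hx =>
    ⟨Set.mem_sInter.2 fun _ hL => hbcn.commIdeal_self_subset hI hL hx,
      subset_fitIdeal hI hbcn (commIdeal_subset_left hI I hx)⟩

theorem exists_isMaximalLeftIdeal_not_subset (hFrat : FratIdeal B = {0}) {K : Set B}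
    (hK : K ⊆ FitIdeal B) (hK0 : ¬ K ⊆ {0}) : ∃ L, IsMaximalLeftIdeal L ∧ ¬ K ⊆ L := by
  by_contra! h
  exact hK0 (hFrat ▸ fun _ hx => ⟨Set.mem_sInter.2 fun L hL => h L hL hx, hK hx⟩)

def IsMinimalIdeal (I : Set B) : Prop :=
  IsIdeal I ∧ I ≠ {0} ∧ ∀ K : Set B, IsIdeal K → K ⊆ I → K = {0} ∨ K = I

variable (B) in
def abelianSocle : Set B := idealClosure (⋃₀ {I : Set B | IsMinimalIdeal I ∧ IsAbelian I})

theorem exists_isMinimalIdeal_subset [Finite B] {I : Set B} (hI : IsIdeal I) (h0 : I ≠ {0}) :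
    ∃ A ⊆ I, IsMinimalIdeal A := by
  obtain ⟨A, ⟨hA, hA0, hAI⟩, hmin⟩ := wellFounded_lt.has_min
    {K : Set B | IsIdeal K ∧ K ≠ {0} ∧ K ⊆ I} ⟨I, hI, h0, subset_rfl⟩
  refine ⟨A, hAI, hA, hA0, fun K hK hKA => or_iff_not_imp_left.2 fun hK0 => ?_⟩
  by_contra hKA'
  exact hmin K ⟨hK, hK0, hKA.trans hAI⟩ (lt_of_le_of_ne hKA hKA')

theorem IsAbelian.subset_abelianSocle [Finite B] (hFrat : FratIdeal B = {0}) {I : Set B}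
    (hI : IsIdeal I) (hab : IsAbelian I) : I ⊆ abelianSocle B := by
  induction I using WellFoundedLT.induction with
  | _ I ih =>
  have hS : IsIdeal (abelianSocle B) := isIdeal_idealClosure _
  by_cases h0 : I = {0}
  · exact h0 ▸ Set.singleton_subset_iff.2 hS.zero_mem
  obtain ⟨A, hAI, hA⟩ := exists_isMinimalIdeal_subset hI h0
  have habA : IsAbelian A := fun a ha b hb => hab a (hAI ha) b (hAI hb)
  have hAS : A ⊆ abelianSocle B := fun x hx => subset_idealClosure _ ⟨A, ⟨hA, habA⟩, hx⟩
  obtain ⟨L, hL, hAL⟩ := exists_isMaximalLeftIdeal_not_subset hFrat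
    (subset_fitIdeal hA.1 habA.bCentrallyNilpotent)
    ((Set.Nonempty.subset_singleton_iff ⟨0, hA.1.zero_mem⟩).not.2 hA.2.1)
  have hIL : I + L = Set.univ := hL.ideal_add_eq_univ hI fun h => hAL (hAI.trans h)
  have hC : IsIdeal (L ∩ I) := isIdeal_inter_of_commIdeal_subset hI hI subset_rfl hL.1 hIL
    ((isAbelian_iff_commIdeal_self_subset.1 hab).trans
      (Set.singleton_subset_iff.2 hL.1.isSubbrace.zero_mem))
  have hCS : L ∩ I ⊆ abelianSocle B :=
    ih _ (lt_of_le_of_ne Set.inter_subset_right fun h => hAL (hAI.trans (Set.inter_eq_right.1 h)))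
      hC fun a ha b hb => hab a ha.2 b hb.2
  intro x hx
  obtain ⟨a, ha, c, hc, rfl⟩ :=
    subset_add_inter hI.isSubbrace hAI (hL.ideal_add_eq_univ hA.1 hAL) hx
  exact hS.add_mem (hAS ha) (hCS hc)

end

end SkewBrace

open SkewBrace

/-- For a finite brace with trivial Frattini ideal, the Fitting ideal is
the sum of all abelian minimal ideals. -/
theorem gaschuetz_fitting {B : Type u} [SkewBrace B] [Finite B]
    (h : FratIdeal B = ({0} : Set B)) :
    FitIdeal B = idealClosure (⋃₀ {I : Set B | IsIdeal I ∧ I ≠ ({0} : Set B) ∧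
      (∀ K : Set B, IsIdeal K → K ⊆ I → K = ({0} : Set B) ∨ K = I) ∧
      ∀ a ∈ I, ∀ b ∈ I, a + b = b + a ∧ a * b = a + b}) := by
  suffices FitIdeal B = abelianSocle B by
    simpa only [abelianSocle, IsMinimalIdeal, IsAbelian, and_assoc] using this
  refine subset_antisymm (idealClosure_subset (isIdeal_idealClosure _) ?_)
    (idealClosure_subset (isIdeal_idealClosure _) ?_)
  · rintro x ⟨I, ⟨hI, hbcn⟩, hx⟩
    exact (hbcn.isAbelian h hI).subset_abelianSocle h hI hx
  · rintro x ⟨I, ⟨hI, hab⟩, hx⟩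
    exact subset_fitIdeal hI.1 hab.bCentrallyNilpotent hx
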